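/- On the open subset M̃ = {(x_1,...,x_{n+1}) ∈ H^n : x_1 x_2 x_{n+1} ≠ 0, x_1 ≠ x_{n+1}} of the hyperboloid model, the vector field V = e^{x_1/x_{n+1}} (∂_2 + x_2 Φ) is a proper torqued vector field: ∇_X V = f X + ω(X) V with f = x_2 e^{x_1/x_{n+1}} nowhere zero, ω = dg with g = x_1/x_{n+1} nowhere zero as a 1-form on M̃, and ω(V) = 0. -/

import Mathlib

/-! The field `T = ∂₂ + x₂ Φ` is the tangential part of the constant vector `∂₂`, hence concircular:
`∇_X T = x₂ X`. The Leibniz rule then gives `∇_X (e^g T) = x₂ e^g X + dg(X) e^g T`.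
Since `g = x₁/x_{n+1}` is homogeneous of degree `0` and independent of `x₂`, `dg` kills both
`Φ` and `∂₂`, hence `V`; and `dg` is nonzero on the tangent vector `x₂ ∂₁ + x₁ ∂₂`. -/

noncomputable section

namespace HyperboloidModel

variable {n : ℕ}

/-- The underlying space `ℝ^(n+1)_1` of Lorentz–Minkowski geometry; the
coordinates `x_1, x_2, x_(n+1)` correspond to the indices `0`, `1`, `Fin.last n`. -/
abbrev E (n : ℕ) := Fin (n + 1) → ℝ

/-- The Lorentz–Minkowski metric `⟨v,w⟩ = −v_1 w_1 + ∑_{i≥2} v_i w_i`. -/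
def mink (v w : E n) : ℝ := (∑ i, v i * w i) - 2 * (v 0 * w 0)

/-- The induced Levi-Civita connection of the hyperboloid `H^n = {P : ⟨P,P⟩ = −1}`:
`∇_X Y = dY(X) − ⟨X,Y⟩ Φ` (Gauss formula), `Φ` the position vector. -/
def hypbConn (X Y : E n → E n) (p : E n) : E n :=
  fderiv ℝ Y p (X p) - mink (X p) (Y p) • p

/-- The function `g = x_1 / x_(n+1)`. -/
def gFun : E n → ℝ := fun q => q 0 / q (Fin.last n)

/-- The vector field `V = e^{x_1/x_(n+1)} (∂_2 + x_2 Φ)`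
(note `T = ∂_2 + ⟨∂_2, Φ⟩Φ = ∂_2 + x_2 Φ`). -/
def V : E n → E n := fun q =>
  Real.exp (gFun q) • ((Pi.single 1 1 : E n) + q 1 • q)

/-- The conformal scalar `f = x_2 e^{x_1/x_(n+1)}`. -/
def f : E n → ℝ := fun q => q 1 * Real.exp (gFun q)

theorem fin_one_ne_zero (hn : 1 ≤ n) : (1 : Fin (n + 1)) ≠ 0 := by
  rw [Ne, Fin.ext_iff, Fin.val_zero, Fin.val_one', Nat.mod_eq_of_lt (by omega)]; omega

theorem fin_last_ne_one (hn : 2 ≤ n) : Fin.last n ≠ 1 := by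
  rw [Ne, Fin.ext_iff, Fin.val_last, Fin.val_one', Nat.mod_eq_of_lt (by omega)]; omega

theorem mink_comm (v w : E n) : mink v w = mink w v := by
  simp only [mink, mul_comm]

theorem mink_add_left (u v w : E n) : mink (u + v) w = mink u w + mink v w := by
  simp only [mink, Pi.add_apply, add_mul, Finset.sum_add_distrib]; ring

theorem mink_smul_left (c : ℝ) (v w : E n) : mink (c • v) w = c * mink v w := by
  simp only [mink, Pi.smul_apply, smul_eq_mul, mul_assoc, ← Finset.mul_sum]; ring

theorem mink_add_right (u v w : E n) : mink u (v + w) = mink u v + mink u w := by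
  simp only [mink_comm u, mink_add_left]

theorem mink_smul_right (c : ℝ) (v w : E n) : mink v (c • w) = c * mink v w := by
  simp only [mink_comm v, mink_smul_left]

theorem mink_single_zero_left (q : E n) : mink (Pi.single 0 1) q = -q 0 := by
  simp only [mink, Pi.single_apply, ite_mul, one_mul, zero_mul, Finset.sum_ite_eq',
    Finset.mem_univ, if_true]
  ring

theorem mink_single_left {j : Fin (n + 1)} (hj : j ≠ 0) (q : E n) :
    mink (Pi.single j 1) q = q j := by
  simp [mink, Pi.single_apply, hj.symm]

def minkForm : LinearMap.BilinForm ℝ (E n) :=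
  LinearMap.mk₂ ℝ mink mink_add_left mink_smul_left mink_add_right mink_smul_right

theorem hasFDerivAt_mink_right (v p : E n) :
    HasFDerivAt (mink v) (LinearMap.toContinuousLinearMap (minkForm v)) p :=
  (LinearMap.toContinuousLinearMap (minkForm v)).hasFDerivAt

theorem hypbConn_smul {φ : E n → ℝ} {X Y : E n → E n} {p : E n}
    (hφ : DifferentiableAt ℝ φ p) (hY : DifferentiableAt ℝ Y p) :
    hypbConn X (fun q => φ q • Y q) p = φ p • hypbConn X Y p + fderiv ℝ φ p (X p) • Y p := by
  simp only [hypbConn, fderiv_fun_smul hφ hY, mink_smul_right, add_apply, smul_apply,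
    ContinuousLinearMap.smulRight_apply]
  module

/-- The tangential part `P₀ + ⟨P₀, Φ⟩ Φ` of the constant vector field `P₀` along `H^n`. -/
def concircularField (P₀ : E n) : E n → E n := fun q => P₀ + mink P₀ q • q

theorem hasFDerivAt_concircularField (P₀ p : E n) :
    HasFDerivAt (concircularField P₀)
      (mink P₀ p • ContinuousLinearMap.id ℝ (E n)
        + (LinearMap.toContinuousLinearMap (minkForm P₀)).smulRight p) p :=
  ((hasFDerivAt_mink_right P₀ p).smul (hasFDerivAt_id p)).const_add P₀

theorem hypbConn_concircularField (P₀ : E n) {X : E n → E n} {p : E n}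
    (hX : mink (X p) p = 0) :
    hypbConn X (concircularField P₀) p = mink P₀ p • X p := by
  rw [hypbConn, (hasFDerivAt_concircularField P₀ p).fderiv]
  simp only [concircularField, add_apply, smul_apply, ContinuousLinearMap.id_apply,
    ContinuousLinearMap.smulRight_apply, LinearMap.coe_toContinuousLinearMap']
  rw [minkForm, LinearMap.mk₂_apply, mink_add_right, mink_smul_right, hX, mink_comm (X p)]
  module

theorem hypbConn_exp_smul_concircularField (P₀ : E n) {g : E n → ℝ} {X : E n → E n} {p : E n}
    (hg : DifferentiableAt ℝ g p) (hX : mink (X p) p = 0) :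
    hypbConn X (fun q => Real.exp (g q) • concircularField P₀ q) p
      = (mink P₀ p * Real.exp (g p)) • X p
        + fderiv ℝ g p (X p) • Real.exp (g p) • concircularField P₀ p := by
  rw [hypbConn_smul hg.exp (hasFDerivAt_concircularField P₀ p).differentiableAt,
    hypbConn_concircularField P₀ hX, hg.hasFDerivAt.exp.fderiv]
  simp only [smul_apply, smul_eq_mul]
  module

theorem hasFDerivAt_gFun {p : E n} (hp : p (Fin.last n) ≠ 0) :
    HasFDerivAt gFun ((p (Fin.last n))⁻¹ • (ContinuousLinearMap.proj 0 : E n →L[ℝ] ℝ)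
      - (p 0 / p (Fin.last n) ^ 2) • ContinuousLinearMap.proj (Fin.last n)) p := by
  have coord (i : Fin (n + 1)) :
      HasFDerivAt (fun q : E n => q i) (ContinuousLinearMap.proj i : E n →L[ℝ] ℝ) p :=
    hasFDerivAt_apply i p
  have h := (coord 0).mul ((hasDerivAt_inv hp).comp_hasFDerivAt p (coord (Fin.last n)))
  rw [show (gFun : E n → ℝ) = _ from funext fun q => div_eq_mul_inv (q 0) (q (Fin.last n))]
  refine h.congr_fderiv ?_
  ext v
  simp only [neg_smul, smul_neg, Function.comp_apply, add_apply, neg_apply, smul_apply,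
    ContinuousLinearMap.proj_apply, smul_eq_mul, sub_apply]
  ring

theorem fderiv_gFun_apply {p : E n} (hp : p (Fin.last n) ≠ 0) (v : E n) :
    fderiv ℝ gFun p v = (v 0 * p (Fin.last n) - p 0 * v (Fin.last n)) / p (Fin.last n) ^ 2 := by
  rw [(hasFDerivAt_gFun hp).fderiv]
  simp only [sub_apply, smul_apply, ContinuousLinearMap.proj_apply, smul_eq_mul]
  field_simp

theorem fderiv_gFun_self {p : E n} (hp : p (Fin.last n) ≠ 0) : fderiv ℝ gFun p p = 0 := by
  rw [fderiv_gFun_apply hp, mul_comm, sub_self, zero_div]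

theorem fderiv_gFun_single {p : E n} (hp : p (Fin.last n) ≠ 0) {j : Fin (n + 1)}
    (hj₀ : j ≠ 0) (hjₗ : j ≠ Fin.last n) : fderiv ℝ gFun p (Pi.single j 1) = 0 := by
  rw [fderiv_gFun_apply hp, Pi.single_eq_of_ne' hj₀, Pi.single_eq_of_ne' hjₗ]
  ring

theorem exists_tangent_fderiv_gFun_ne_zero {p : E n} (hp : p (Fin.last n) ≠ 0)
    {j : Fin (n + 1)} (hj₀ : j ≠ 0) (hjₗ : j ≠ Fin.last n) (hpj : p j ≠ 0) :
    ∃ v : E n, mink v p = 0 ∧ fderiv ℝ gFun p v ≠ 0 := by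
  refine ⟨p j • Pi.single 0 1 + p 0 • Pi.single j 1, ?_, ?_⟩
  · rw [mink_add_left, mink_smul_left, mink_smul_left, mink_single_zero_left,
      mink_single_left hj₀]
    ring
  · have hₗ₀ : Fin.last n ≠ 0 := by
      rintro h
      obtain rfl := Fin.last_eq_zero_iff.mp h
      exact hj₀ (Fin.fin_one_eq_zero j)
    rw [map_add, map_smul, map_smul, fderiv_gFun_single hp hj₀ hjₗ, fderiv_gFun_apply hp,
      Pi.single_eq_same, Pi.single_eq_of_ne hₗ₀]
    simp only [smul_eq_mul, one_mul, mul_zero, sub_zero, add_zero]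
    exact mul_ne_zero hpj (div_ne_zero hp (pow_ne_zero 2 hp))

theorem V_eq_exp_smul_concircularField (hn : 1 ≤ n) :
    V = fun q : E n => Real.exp (gFun q) • concircularField (Pi.single 1 1) q := by
  funext q
  rw [V, concircularField, mink_single_left (fin_one_ne_zero hn)]

theorem proper_torqued_field_on_hyperboloid_general (hn : 2 ≤ n) (p : E n)
    (hp1 : p 0 * p 1 * p (Fin.last n) ≠ 0) :                      -- x_1 x_2 x_(n+1) ≠ 0
    -- the torqued equation ∇_X V = f X + ω(X) V for all tangent X:
    (∀ X : E n → E n, mink (X p) p = 0 →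
        hypbConn X V p = f p • X p + fderiv ℝ gFun p (X p) • V p) ∧
    -- ω(V) = 0:
    fderiv ℝ gFun p (V p) = 0 ∧
    -- the conformal scalar f is nowhere zero on M̃:
    f p ≠ 0 ∧
    -- the generating form ω = dg is nowhere zero as a 1-form on M̃:
    (∃ v : E n, mink v p = 0 ∧ fderiv ℝ gFun p v ≠ 0) := by
  have hp₁ : p 1 ≠ 0 := right_ne_zero_of_mul (left_ne_zero_of_mul hp1)
  have hpₗ : p (Fin.last n) ≠ 0 := right_ne_zero_of_mul hp1
  have h₁₀ : (1 : Fin (n + 1)) ≠ 0 := fin_one_ne_zero (by omega)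
  have h₁ₗ : (1 : Fin (n + 1)) ≠ Fin.last n := (fin_last_ne_one hn).symm
  refine ⟨fun X hX => ?_, ?_, mul_ne_zero hp₁ (Real.exp_ne_zero _),
    exists_tangent_fderiv_gFun_ne_zero hpₗ h₁₀ h₁ₗ hp₁⟩
  · rw [V_eq_exp_smul_concircularField (by omega),
      hypbConn_exp_smul_concircularField _ (hasFDerivAt_gFun hpₗ).differentiableAt hX,
      mink_single_left h₁₀]
    rfl
  · rw [V, map_smul, map_add, map_smul, fderiv_gFun_single hpₗ h₁₀ h₁ₗ, fderiv_gFun_self hpₗ,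
      smul_zero, add_zero, smul_zero]

/-- On the open subset
`M̃ = {x ∈ H^n : x_1 x_2 x_(n+1) ≠ 0, x_1 ≠ x_(n+1)}` of the hyperboloid model,
the vector field `V = e^{x_1/x_(n+1)}(∂_2 + x_2 Φ)` is a proper torqued vector
field: `∇_X V = f X + ω(X) V` with `f = x_2 e^{x_1/x_(n+1)}` nowhere zero,
`ω = dg` (with `g = x_1/x_(n+1)`) nowhere zero as a 1-form on `M̃`, and `ω(V) = 0`. -/
theorem proper_torqued_field_on_hyperboloid (hn : 2 ≤ n) (p : E n)
    (hp : mink p p = -1)                                        -- p ∈ H^n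
    (hp1 : p 0 * p 1 * p (Fin.last n) ≠ 0)                      -- x_1 x_2 x_(n+1) ≠ 0
    (hp2 : p 0 ≠ p (Fin.last n)) :                              -- x_1 ≠ x_(n+1)
    -- the torqued equation ∇_X V = f X + ω(X) V for all tangent X:
    (∀ X : E n → E n, mink (X p) p = 0 →
        hypbConn X V p = f p • X p + fderiv ℝ gFun p (X p) • V p) ∧
    -- ω(V) = 0:
    fderiv ℝ gFun p (V p) = 0 ∧
    -- the conformal scalar f is nowhere zero on M̃:
    f p ≠ 0 ∧
    -- the generating form ω = dg is nowhere zero as a 1-form on M̃: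
    (∃ v : E n, mink v p = 0 ∧ fderiv ℝ gFun p v ≠ 0) :=
  proper_torqued_field_on_hyperboloid_general hn p hp1

end HyperboloidModel
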